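/- Let $Y_n$ and $Y'_n$ be sequences of real random variables with means $\mu_n, \mu'_n$ and standard deviations $\sigma_n, \sigma'_n > 0$. Suppose there are sequences $\epsilon_1(n),\epsilon_2(n),\epsilon_3(n),\epsilon_4(n) \to 0$ such that (i) $|\mu'_n - \mu_n| \le \epsilon_1(n)\sigma'_n$, (ii) $|\sigma'_n - \sigma_n| \le \epsilon_2(n)\sigma'_n$, (iii) for all $t$, $|\mathbb{P}(Y'_n \ge t) - \mathbb{P}(Y_n \ge t)| \le \epsilon_3(n)$, and (iv) for all $t$, $|\mathbb{P}((Y'_n-\mu'_n)/\sigma'_n \le t) - \Phi(t)| \le \epsilon_4(n)$, where $\Phi$ is the standard normal CDF. Then there is a constant $C > 0$ such that for all $t$ and all $n$, $|\mathbb{P}((Y_n-\mu_n)/\sigma_n \le t) - \Phi(t)| \le C\sum_{i=1}^4 \epsilon_i(n)$. -/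

import Mathlib

open MeasureTheory

/-- Standard normal cumulative distribution function. -/
noncomputable def stdNormalCDF (t : ℝ) : ℝ :=
  ∫ x in Set.Iic t, Real.exp (-x ^ 2 / 2) / Real.sqrt (2 * Real.pi)

/-!
Put `s = μ + t σ`, so that the quantity to bound is `P(Y ≤ s)`. Condition (iii) transfers the
normal approximation (iv) of `Y'` to `Y` at the point `(s - μ') / σ' = (σ / σ') t + (μ - μ') / σ'`
at cost `ε₃ + ε₄`; the continuity of `Φ` absorbs the gap between `Y < s` and `Y ≤ s`.
It remains to compare `Φ (a t + b)` with `Φ t`, where `|b| ≤ ε₁` and `|a - 1| ≤ ε₂`. The Gaussian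
density is at most `1/2`, so `Φ` is `1/2`-Lipschitz, which handles the shift `b`. For `|a - 1| ≤ 1/2`
the density between `t` and `a t` is at most `exp (-t² / 8) / 2`, and `|t| exp (-t² / 8) ≤ 4` gives
`|Φ (a t) - Φ t| ≤ 2 |a - 1|`. When `ε₂ > 1/2` the trivial bound `1` suffices, so `C = 2` works.
-/

open ProbabilityTheory Real Set Filter Topology

lemma stdNormalCDF_eq_setIntegral_gaussianPDFReal (t : ℝ) :
    stdNormalCDF t = ∫ x in Iic t, gaussianPDFReal 0 1 x := by
  simp [stdNormalCDF, gaussianPDFReal, div_eq_inv_mul]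

lemma stdNormalCDF_nonneg (t : ℝ) : 0 ≤ stdNormalCDF t := by
  rw [stdNormalCDF_eq_setIntegral_gaussianPDFReal]
  exact setIntegral_nonneg measurableSet_Iic fun x _ ↦ gaussianPDFReal_nonneg 0 1 x

lemma stdNormalCDF_le_one (t : ℝ) : stdNormalCDF t ≤ 1 := by
  rw [stdNormalCDF_eq_setIntegral_gaussianPDFReal, ← integral_gaussianPDFReal_eq_one 0 one_ne_zero]
  exact setIntegral_le_integral (integrable_gaussianPDFReal 0 1)
    (Eventually.of_forall (gaussianPDFReal_nonneg 0 1))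

lemma gaussianPDFReal_zero_one_le (x : ℝ) : gaussianPDFReal 0 1 x ≤ exp (-x ^ 2 / 2) / 2 := by
  have h2π : (2 : ℝ) ≤ √(2 * π) :=
    (le_sqrt zero_le_two (by positivity)).2 (by nlinarith [pi_gt_three])
  simp only [gaussianPDFReal, NNReal.coe_one, sub_zero, mul_one, inv_mul_eq_div]
  gcongr

lemma abs_stdNormalCDF_sub_le {x y M : ℝ} (h : ∀ u ∈ uIoc y x, exp (-u ^ 2 / 2) ≤ M) :
    |stdNormalCDF x - stdNormalCDF y| ≤ M / 2 * |x - y| := by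
  have hint : ∀ t, IntegrableOn (gaussianPDFReal 0 1) (Iic t) :=
    fun t ↦ (integrable_gaussianPDFReal 0 1).integrableOn
  rw [stdNormalCDF_eq_setIntegral_gaussianPDFReal, stdNormalCDF_eq_setIntegral_gaussianPDFReal,
    intervalIntegral.integral_Iic_sub_Iic (E := ℝ) (hint y) (hint x), ← Real.norm_eq_abs]
  refine intervalIntegral.norm_integral_le_of_norm_le_const fun u hu ↦ ?_
  rw [Real.norm_of_nonneg (gaussianPDFReal_nonneg 0 1 u)]
  exact (gaussianPDFReal_zero_one_le u).trans (by linarith [h u hu])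

lemma abs_stdNormalCDF_sub_le_half (x y : ℝ) :
    |stdNormalCDF x - stdNormalCDF y| ≤ |x - y| / 2 := by
  have := abs_stdNormalCDF_sub_le (x := x) (y := y) (M := 1) fun u _ ↦
    exp_le_one_iff.2 (by nlinarith [sq_nonneg u])
  linarith

lemma continuous_stdNormalCDF : Continuous stdNormalCDF :=
  (LipschitzWith.of_dist_le_mul (K := 2⁻¹) fun x y ↦ by
    simpa [Real.dist_eq, div_eq_inv_mul] using abs_stdNormalCDF_sub_le_half x y).continuous

lemma abs_mul_exp_neg_sq_div_eight_le (t : ℝ) : |t| * exp (-t ^ 2 / 8) ≤ 4 := by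
  rw [neg_div, exp_neg, ← div_eq_mul_inv, div_le_iff₀ (exp_pos _)]
  nlinarith [sq_nonneg (|t| - 1), add_one_le_exp (t ^ 2 / 8), sq_abs t]

lemma abs_stdNormalCDF_mul_sub_le {a : ℝ} (ha : |a - 1| ≤ 1 / 2) (t : ℝ) :
    |stdNormalCDF (a * t) - stdNormalCDF t| ≤ 2 * |a - 1| := by
  obtain ⟨ha₁, ha₂⟩ := abs_le.1 ha
  -- every `u` between `t` and `a * t` satisfies `u * t ≥ t ^ 2 / 2`, hence `u ^ 2 ≥ t ^ 2 / 4`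
  have hM : ∀ u ∈ uIoc t (a * t), exp (-u ^ 2 / 2) ≤ exp (-t ^ 2 / 8) := by
    intro u hu
    have hut : t ^ 2 / 2 ≤ u * t := by
      rcases mem_uIcc.1 (uIoc_subset_uIcc hu) with ⟨h₁, h₂⟩ | ⟨h₁, h₂⟩ <;>
        rcases le_total 0 t with ht | ht <;> nlinarith
    exact exp_le_exp.2 (by nlinarith [sq_nonneg (u - t / 2)])
  calc |stdNormalCDF (a * t) - stdNormalCDF t|
      ≤ exp (-t ^ 2 / 8) / 2 * |a * t - t| := abs_stdNormalCDF_sub_le hM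
    _ = |a - 1| * (|t| * exp (-t ^ 2 / 8)) / 2 := by
      rw [← sub_one_mul, abs_mul]; ring
    _ ≤ |a - 1| * 4 / 2 := by gcongr; exact abs_mul_exp_neg_sq_div_eight_le t
    _ = 2 * |a - 1| := by ring

lemma abs_stdNormalCDF_affine_sub_le {a : ℝ} (ha : |a - 1| ≤ 1 / 2) (b t : ℝ) :
    |stdNormalCDF (a * t + b) - stdNormalCDF t| ≤ |b| / 2 + 2 * |a - 1| := by
  have hb := abs_stdNormalCDF_sub_le_half (a * t + b) (a * t)
  rw [add_sub_cancel_left] at hb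
  linarith [abs_sub_le (stdNormalCDF (a * t + b)) (stdNormalCDF (a * t)) (stdNormalCDF t),
    abs_stdNormalCDF_mul_sub_le ha t]

lemma setOf_sub_div_le_eq {α : Type*} {X : α → ℝ} {m s : ℝ} (hs : 0 < s) (t : ℝ) :
    {ω | (X ω - m) / s ≤ t} = {ω | X ω ≤ m + t * s} := by
  ext ω
  exact (div_le_iff₀ hs).trans sub_le_iff_le_add'

lemma abs_sub_div_le_of_abs_sub_le_mul {x y e s : ℝ} (hs : 0 < s) (h : |y - x| ≤ e * s) :
    |(x - y) / s| ≤ e := by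
  rwa [abs_div, abs_of_pos hs, div_le_iff₀ hs, abs_sub_comm]

lemma probReal_lt_eq_one_sub {Ω : Type*} [MeasurableSpace Ω] {P : Measure Ω}
    [IsProbabilityMeasure P] {X : Ω → ℝ} (hX : Measurable X) (t : ℝ) :
    P.real {ω | X ω < t} = 1 - P.real {ω | t ≤ X ω} := by
  rw [← probReal_compl_eq_one_sub (measurableSet_le measurable_const hX)]
  congr 1
  ext ω
  simp

lemma abs_probReal_le_sub_le_of_tails_close {Ω Ω' : Type*} [MeasurableSpace Ω]
    [MeasurableSpace Ω'] {P : Measure Ω} {P' : Measure Ω'} [IsProbabilityMeasure P]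
    [IsProbabilityMeasure P'] {X : Ω → ℝ} {X' : Ω' → ℝ} (hX : Measurable X) (hX' : Measurable X')
    {G : ℝ → ℝ} (hG : Continuous G) {ε δ : ℝ}
    (htail : ∀ t, |P'.real {ω | t ≤ X' ω} - P.real {ω | t ≤ X ω}| ≤ ε)
    (hcdf : ∀ t, |P'.real {ω | X' ω ≤ t} - G t| ≤ δ) (t : ℝ) :
    |P.real {ω | X ω ≤ t} - G t| ≤ ε + δ := by
  have hupper : P.real {ω | X ω ≤ t} - (ε + δ) ≤ G t := by
    refine ge_of_tendsto ((hG.tendsto t).mono_left (nhdsWithin_le_nhds (s := Ioi t)))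
      (eventually_nhdsWithin_of_forall fun c (hc : c ∈ Ioi t) ↦ ?_)
    calc P.real {ω | X ω ≤ t} - (ε + δ)
        ≤ P.real {ω | X ω < c} - (ε + δ) :=
          sub_le_sub_right (measureReal_mono fun ω (hω : X ω ≤ t) ↦ hω.trans_lt hc) _
      _ = 1 - P.real {ω | c ≤ X ω} - (ε + δ) := by rw [probReal_lt_eq_one_sub hX]
      _ ≤ 1 - P'.real {ω | c ≤ X' ω} - δ := by linarith [(abs_le.1 (htail c)).2]
      _ = P'.real {ω | X' ω < c} - δ := by rw [probReal_lt_eq_one_sub hX']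
      _ ≤ P'.real {ω | X' ω ≤ c} - δ :=
          sub_le_sub_right (measureReal_mono fun ω (hω : X' ω < c) ↦ hω.le) _
      _ ≤ G c := by linarith [(abs_le.1 (hcdf c)).2]
  have hlower : G t ≤ P.real {ω | X ω ≤ t} + (ε + δ) := by
    refine le_of_tendsto ((hG.tendsto t).mono_left (nhdsWithin_le_nhds (s := Iio t)))
      (eventually_nhdsWithin_of_forall fun c (hc : c ∈ Iio t) ↦ ?_)
    calc G c
        ≤ P'.real {ω | X' ω ≤ c} + δ := by linarith [(abs_le.1 (hcdf c)).1]
      _ ≤ P'.real {ω | X' ω < t} + δ :=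
          add_le_add_left (measureReal_mono fun ω (hω : X' ω ≤ c) ↦ hω.trans_lt hc) _
      _ = 1 - P'.real {ω | t ≤ X' ω} + δ := by rw [probReal_lt_eq_one_sub hX']
      _ ≤ 1 - P.real {ω | t ≤ X ω} + (ε + δ) := by linarith [(abs_le.1 (htail t)).1]
      _ = P.real {ω | X ω < t} + (ε + δ) := by rw [probReal_lt_eq_one_sub hX]
      _ ≤ P.real {ω | X ω ≤ t} + (ε + δ) :=
          add_le_add_left (measureReal_mono fun ω (hω : X ω < t) ↦ hω.le) _
  rw [abs_sub_le_iff]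
  constructor <;> linarith

theorem clt_transfer_general
    {Ω Ω' : ℕ → Type*} [∀ n, MeasurableSpace (Ω n)] [∀ n, MeasurableSpace (Ω' n)]
    (P : ∀ n, Measure (Ω n)) (P' : ∀ n, Measure (Ω' n))
    [∀ n, IsProbabilityMeasure (P n)] [∀ n, IsProbabilityMeasure (P' n)]
    (Y : ∀ n, Ω n → ℝ) (Y' : ∀ n, Ω' n → ℝ)
    (hY : ∀ n, Measurable (Y n)) (hY' : ∀ n, Measurable (Y' n))
    (μ μ' σ σ' : ℕ → ℝ)
    (hσpos : ∀ n, 0 < σ n) (hσ'pos : ∀ n, 0 < σ' n)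
    (ε₁ ε₂ ε₃ ε₄ : ℕ → ℝ)
    (h1 : ∀ n, |μ' n - μ n| ≤ ε₁ n * σ' n)
    (h2 : ∀ n, |σ' n - σ n| ≤ ε₂ n * σ' n)
    (h3 : ∀ n t, |(P' n {ω | t ≤ Y' n ω}).toReal - (P n {ω | t ≤ Y n ω}).toReal| ≤ ε₃ n)
    (h4 : ∀ n t,
      |(P' n {ω | (Y' n ω - μ' n) / σ' n ≤ t}).toReal - stdNormalCDF t| ≤ ε₄ n) :
    ∃ C > 0, ∀ n t,
      |(P n {ω | (Y n ω - μ n) / σ n ≤ t}).toReal - stdNormalCDF t|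
        ≤ C * (ε₁ n + ε₂ n + ε₃ n + ε₄ n) := by
  refine ⟨2, two_pos, fun n t ↦ ?_⟩
  have hε₁ : 0 ≤ ε₁ n := nonneg_of_mul_nonneg_left ((abs_nonneg _).trans (h1 n)) (hσ'pos n)
  have hε₃ : 0 ≤ ε₃ n := (abs_nonneg _).trans (h3 n 0)
  have hε₄ : 0 ≤ ε₄ n := (abs_nonneg _).trans (h4 n 0)
  change |(P n).real _ - _| ≤ _
  rw [setOf_sub_div_le_eq (hσpos n)]
  rcases lt_or_ge (1 / 2) (ε₂ n) with hε₂ | hε₂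
  · have := abs_sub_le_of_nonneg_of_le
      (measureReal_nonneg (μ := P n) (s := {ω | Y n ω ≤ μ n + t * σ n})) measureReal_le_one
      (stdNormalCDF_nonneg t) (stdNormalCDF_le_one t)
    linarith
  have hcdf' : ∀ x, |(P' n).real {ω | Y' n ω ≤ x} - stdNormalCDF ((x - μ' n) / σ' n)| ≤ ε₄ n := by
    intro x
    have := h4 n ((x - μ' n) / σ' n)
    rwa [setOf_sub_div_le_eq (hσ'pos n), div_mul_cancel₀ _ (hσ'pos n).ne', add_sub_cancel] at this
  have hY_close := abs_probReal_le_sub_le_of_tails_close (hY n) (hY' n)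
    (G := fun x ↦ stdNormalCDF ((x - μ' n) / σ' n)) (continuous_stdNormalCDF.comp (by fun_prop))
    (h3 n) hcdf' (μ n + t * σ n)
  beta_reduce at hY_close
  have ha : |σ n / σ' n - 1| ≤ ε₂ n := by
    rw [div_sub_one (hσ'pos n).ne']; exact abs_sub_div_le_of_abs_sub_le_mul (hσ'pos n) (h2 n)
  have hΦ := abs_stdNormalCDF_affine_sub_le (ha.trans hε₂) ((μ n - μ' n) / σ' n) t
  rw [show σ n / σ' n * t + (μ n - μ' n) / σ' n = (μ n + t * σ n - μ' n) / σ' n by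
    field_simp; ring] at hΦ
  linarith [abs_sub_le ((P n).real {ω | Y n ω ≤ μ n + t * σ n})
    (stdNormalCDF ((μ n + t * σ n - μ' n) / σ' n)) (stdNormalCDF t),
    abs_sub_div_le_of_abs_sub_le_mul (hσ'pos n) (h1 n)]

/-- Lemma 4.1: transfer of the CLT along close sequences of random variables. -/
theorem clt_transfer
    {Ω Ω' : ℕ → Type*} [∀ n, MeasurableSpace (Ω n)] [∀ n, MeasurableSpace (Ω' n)]
    (P : ∀ n, Measure (Ω n)) (P' : ∀ n, Measure (Ω' n))
    [∀ n, IsProbabilityMeasure (P n)] [∀ n, IsProbabilityMeasure (P' n)]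
    (Y : ∀ n, Ω n → ℝ) (Y' : ∀ n, Ω' n → ℝ)
    (hY : ∀ n, Measurable (Y n)) (hY' : ∀ n, Measurable (Y' n))
    (μ μ' σ σ' : ℕ → ℝ)
    (hμ : ∀ n, μ n = ∫ ω, Y n ω ∂(P n))
    (hμ' : ∀ n, μ' n = ∫ ω, Y' n ω ∂(P' n))
    (hσpos : ∀ n, 0 < σ n) (hσ'pos : ∀ n, 0 < σ' n)
    (hσ : ∀ n, (σ n) ^ 2 = ∫ ω, (Y n ω - μ n) ^ 2 ∂(P n))
    (hσ' : ∀ n, (σ' n) ^ 2 = ∫ ω, (Y' n ω - μ' n) ^ 2 ∂(P' n))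
    (ε₁ ε₂ ε₃ ε₄ : ℕ → ℝ)
    (hε₁0 : Filter.Tendsto ε₁ Filter.atTop (nhds 0))
    (hε₂0 : Filter.Tendsto ε₂ Filter.atTop (nhds 0))
    (hε₃0 : Filter.Tendsto ε₃ Filter.atTop (nhds 0))
    (hε₄0 : Filter.Tendsto ε₄ Filter.atTop (nhds 0))
    (h1 : ∀ n, |μ' n - μ n| ≤ ε₁ n * σ' n)
    (h2 : ∀ n, |σ' n - σ n| ≤ ε₂ n * σ' n)
    (h3 : ∀ n t, |(P' n {ω | t ≤ Y' n ω}).toReal - (P n {ω | t ≤ Y n ω}).toReal| ≤ ε₃ n)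
    (h4 : ∀ n t,
      |(P' n {ω | (Y' n ω - μ' n) / σ' n ≤ t}).toReal - stdNormalCDF t| ≤ ε₄ n) :
    ∃ C > 0, ∀ n t,
      |(P n {ω | (Y n ω - μ n) / σ n ≤ t}).toReal - stdNormalCDF t|
        ≤ C * (ε₁ n + ε₂ n + ε₃ n + ε₄ n) :=
  clt_transfer_general P P' Y Y' hY hY' μ μ' σ σ' hσpos hσ'pos ε₁ ε₂ ε₃ ε₄ h1 h2 h3 h4
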